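/- Let G be a locally finite graph. Suppose there exist a vertex g_0 and a real number λ > 1 such that for every integer n ≥ 0 and every subset A of the sphere S_G(g_0, n), the set A* of vertices of S_G(g_0, n+1) adjacent to a vertex of A satisfies |A*| ≥ λ·|A|. Then for every d ≥ 0 and every constant c ≥ 1, the graph G does not have the {c·n^d}-containment property; in particular G does not have the O(n^d)-containment property for any d ≥ 0. -/

import Mathlib

/-!
Start the fire on the sphere of radius `m` about `g0`, and let `T n` be the burning part of the
sphere of radius `m + n` at time `n`. Every vertex of `(T n)*` not protected by time `n + 1` burns
at time `n + 1`, so `|T (n+1)| ≥ λ |T n| - c (n+1)^(d+1)`. Dividing by `λ^(n+1)`, the series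
`∑ c (n+1)^(d+1) / λ^(n+1)` converges, so once `|T 0| ≥ λ^m` exceeds its sum, `T n` is never
empty.
But a fire started inside the ball of radius `m` stays inside the ball of radius `m + n` at time
`n`, so a fire that is constant from time `N` on cannot meet the sphere of radius `m + N + 1`.
-/

open SimpleGraph

namespace Firefighter

variable {V : Type*}

/-- The set of vertices on fire at time `n`, starting from initial fire `X0`, with fire spreading
along paths of length at most `r` avoiding the protected sets `W 1, ..., W n`. -/
def fireSet (G : SimpleGraph V) (r : ℕ) (X0 : Set V) (W : ℕ → Set V) : ℕ → Set V
  | 0 => X0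
  | n + 1 => {v | ∃ u ∈ fireSet G r X0 W n, ∃ p : G.Walk u v, p.length ≤ r ∧
      ∀ w ∈ p.support, ∀ i, 1 ≤ i → i ≤ n + 1 → w ∉ W i}

/-- `W` is an `(f, r)`-containment strategy for the initial fire `X0` in `G`. -/
def IsContainmentStrategy (G : SimpleGraph V) (r : ℕ) (f : ℕ → ℕ)
    (X0 : Set V) (W : ℕ → Set V) : Prop :=
  (∀ n, 1 ≤ n → (W n).Finite ∧ (W n).ncard ≤ f n) ∧
  (∀ n, Disjoint (fireSet G r X0 W n) (W (n + 1))) ∧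
  (∃ N, 0 < N ∧ ∀ n, N ≤ n → fireSet G r X0 W n = fireSet G r X0 W N)

/-- `G` has the `(f, r)`-containment property. -/
def HasContainmentProperty (G : SimpleGraph V) (r : ℕ) (f : ℕ → ℕ) : Prop :=
  ∀ X0 : Set V, X0.Finite → ∃ W : ℕ → Set V, IsContainmentStrategy G r f X0 W

/-- A graph is locally finite if every vertex has finitely many neighbors. -/
def LocallyFiniteGraph (G : SimpleGraph V) : Prop := ∀ v, (G.neighborSet v).Finite

/-- The ball of radius `n` about the vertex `g0` (in the combinatorial metric). -/
def ball (G : SimpleGraph V) (g0 : V) (n : ℕ) : Set V :=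
  {v | G.Reachable g0 v ∧ G.dist g0 v ≤ n}

/-- The sphere of radius `n` about the vertex `g0` (in the combinatorial metric). -/
def sphere (G : SimpleGraph V) (g0 : V) (n : ℕ) : Set V :=
  {v | G.Reachable g0 v ∧ G.dist g0 v = n}

/-- For `T` a subset of the sphere of radius `n`, `nextAdj G g0 n T` is the set `T*` of vertices
of the sphere of radius `n+1` adjacent to at least one vertex of `T`. -/
def nextAdj (G : SimpleGraph V) (g0 : V) (n : ℕ) (T : Set V) : Set V :=
  {v ∈ sphere G g0 (n + 1) | ∃ u ∈ T, G.Adj u v}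

/-- A graph has bounded degree if there is a uniform finite bound on vertex degrees. -/
def BoundedDegree (G : SimpleGraph V) : Prop :=
  ∃ D : ℕ, ∀ v, (G.neighborSet v).Finite ∧ (G.neighborSet v).ncard ≤ D

/-- Two graphs are quasi-isometric. -/
def QuasiIsometric {V' : Type*} (G : SimpleGraph V) (H : SimpleGraph V') : Prop :=
  ∃ c : ℕ, 1 ≤ c ∧ ∃ (φ : V → V') (ψ : V' → V),
    (∀ g1 g2, H.dist (φ g1) (φ g2) ≤ c * G.dist g1 g2 + c) ∧
    (∀ h1 h2, G.dist (ψ h1) (ψ h2) ≤ c * H.dist h1 h2 + c) ∧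
    (∀ g, G.dist g (ψ (φ g)) ≤ c) ∧
    (∀ h, H.dist h (φ (ψ h)) ≤ c)

/-- `f ≼ g` : there is `c > 0` with `f n ≤ c * g (c*n + c) + c` for all `n ≥ c`. -/
def Preceq (f g : ℕ → ℕ) : Prop :=
  ∃ c : ℕ, 0 < c ∧ ∀ n, c ≤ n → f n ≤ c * g (c * n + c) + c

/-- `f` and `g` have equivalent asymptotic growth. -/
def AsympEquiv (f g : ℕ → ℕ) : Prop := Preceq f g ∧ Preceq g f

/-- The ball of radius `n` about a set `X` of vertices. -/
def ballSet (G : SimpleGraph V) (X : Set V) (n : ℕ) : Set V :=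
  {v | ∃ u ∈ X, ∃ p : G.Walk u v, p.length ≤ n}

section Spheres

variable {G : SimpleGraph V} {g0 : V}

lemma sphere_zero : sphere G g0 0 = {g0} := by
  ext v
  simp only [sphere, Set.mem_ofPred_eq, Set.mem_singleton_iff]
  exact ⟨fun ⟨hr, hd⟩ => (hr.dist_eq_zero_iff.mp hd).symm,
    fun h => h ▸ ⟨Reachable.refl _, dist_self⟩⟩

lemma exists_adj_of_mem_sphere_succ {n : ℕ} {v : V} (hv : v ∈ sphere G g0 (n + 1)) :
    ∃ u ∈ sphere G g0 n, G.Adj u v := by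
  obtain ⟨hr, hd⟩ := hv
  obtain ⟨p, hp⟩ := hr.exists_walk_length_eq_dist
  have hne : v ≠ g0 := by
    rintro rfl
    simp at hd
  obtain ⟨u, hvu, q, hq⟩ := p.reverse.exists_eq_cons_of_ne hne
  have hqlen : q.length = n := by
    have := congrArg Walk.length hq
    simp only [Walk.length_reverse, Walk.length_cons] at this
    omega
  have hru : G.Reachable g0 u := hr.trans hvu.reachable
  have hle : G.dist g0 u ≤ n := hqlen ▸ dist_comm (G := G) ▸ dist_le q
  have hge : G.dist g0 v ≤ G.dist g0 u + 1 :=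
    dist_eq_one_iff_adj.mpr hvu.symm ▸ hru.dist_triangle_left v
  exact ⟨u, ⟨hru, by omega⟩, hvu.symm⟩

lemma sphere_finite (hlf : LocallyFiniteGraph G) (g0 : V) (n : ℕ) :
    (sphere G g0 n).Finite := by
  induction n with
  | zero => simp [sphere_zero]
  | succ n ih =>
    refine (ih.biUnion fun u _ => hlf u).subset fun v hv => ?_
    obtain ⟨u, hu, huv⟩ := exists_adj_of_mem_sphere_succ hv
    exact Set.mem_biUnion hu huv

lemma sphere_subset_ball (n : ℕ) : sphere G g0 n ⊆ ball G g0 n :=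
  fun _ ⟨hr, hd⟩ => ⟨hr, hd.le⟩

lemma pow_le_ncard_sphere (hlf : LocallyFiniteGraph G) {lam : ℝ} (hlam : 0 ≤ lam)
    (hexp : ∀ n : ℕ, ∀ A ⊆ sphere G g0 n,
      lam * (A.ncard : ℝ) ≤ ((nextAdj G g0 n A).ncard : ℝ)) (n : ℕ) :
    lam ^ n ≤ ((sphere G g0 n).ncard : ℝ) := by
  induction n with
  | zero => simp [sphere_zero]
  | succ n ih =>
    have hnext : (nextAdj G g0 n (sphere G g0 n)).ncard ≤ (sphere G g0 (n + 1)).ncard :=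
      Set.ncard_le_ncard (fun _ hv => hv.1) (sphere_finite hlf g0 (n + 1))
    calc lam ^ (n + 1) = lam * lam ^ n := pow_succ' lam n
      _ ≤ lam * ((sphere G g0 n).ncard : ℝ) := mul_le_mul_of_nonneg_left ih hlam
      _ ≤ ((nextAdj G g0 n (sphere G g0 n)).ncard : ℝ) := hexp n _ subset_rfl
      _ ≤ ((sphere G g0 (n + 1)).ncard : ℝ) := by exact_mod_cast hnext

end Spheres

section Fire

variable {G : SimpleGraph V} {r : ℕ} {X0 : Set V} {W : ℕ → Set V}

lemma fireSet_subset_ball {g0 : V} {m : ℕ} (hX0 : X0 ⊆ ball G g0 m) (n : ℕ) :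
    fireSet G r X0 W n ⊆ ball G g0 (m + r * n) := by
  induction n with
  | zero => simpa [fireSet] using hX0
  | succ n ih =>
    rintro v ⟨u, hu, p, hp, -⟩
    obtain ⟨hru, hdu⟩ := ih hu
    obtain ⟨q, hq⟩ := hru.exists_walk_length_eq_dist
    refine ⟨hru.trans ⟨p⟩, (dist_le (q.append p)).trans ?_⟩
    rw [Walk.length_append, hq, Nat.mul_succ]
    omega

lemma notMem_of_mem_fireSet (hd : ∀ n, Disjoint (fireSet G r X0 W n) (W (n + 1)))
    {n i : ℕ} {v : V} (hv : v ∈ fireSet G r X0 W n) (hi : 1 ≤ i) (hin : i ≤ n + 1) :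
    v ∉ W i := by
  rcases hin.eq_or_lt with rfl | hlt
  · exact Set.disjoint_left.mp (hd n) hv
  · cases n with
    | zero => omega
    | succ k =>
      obtain ⟨_, _, p, _, hp⟩ := hv
      exact hp v p.end_mem_support i hi (by omega)

lemma mem_fireSet_succ_of_adj (hr : 1 ≤ r) (hd : ∀ n, Disjoint (fireSet G r X0 W n) (W (n + 1)))
    {n : ℕ} {u v : V} (hu : u ∈ fireSet G r X0 W n) (huv : G.Adj u v)
    (hv : ∀ i, 1 ≤ i → i ≤ n + 1 → v ∉ W i) :
    v ∈ fireSet G r X0 W (n + 1) := by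
  refine ⟨u, hu, Walk.cons huv Walk.nil, by simpa using hr, fun w hw i hi hin => ?_⟩
  rcases (by simpa using hw : w = u ∨ w = v) with rfl | rfl
  · exact notMem_of_mem_fireSet hd hu hi hin
  · exact hv i hi hin

lemma ncard_fireSet_inter_sphere_succ {g0 : V} {f : ℕ → ℕ} {lam : ℝ}
    (hlf : LocallyFiniteGraph G)
    (hexp : ∀ n : ℕ, ∀ A ⊆ sphere G g0 n,
      lam * (A.ncard : ℝ) ≤ ((nextAdj G g0 n A).ncard : ℝ))
    (hr : 1 ≤ r) (hcard : ∀ n, 1 ≤ n → (W n).Finite ∧ (W n).ncard ≤ f n)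
    (hd : ∀ n, Disjoint (fireSet G r X0 W n) (W (n + 1))) (m n : ℕ) :
    lam * ((fireSet G r X0 W n ∩ sphere G g0 (m + n)).ncard : ℝ)
        - ((∑ i ∈ Finset.Icc 1 (n + 1), f i : ℕ) : ℝ)
      ≤ ((fireSet G r X0 W (n + 1) ∩ sphere G g0 (m + (n + 1))).ncard : ℝ) := by
  set A := nextAdj G g0 (m + n) (fireSet G r X0 W n ∩ sphere G g0 (m + n))
  set U := ⋃ i ∈ Finset.Icc 1 (n + 1), W i
  have hgrow := hexp (m + n) (fireSet G r X0 W n ∩ sphere G g0 (m + n)) Set.inter_subset_right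
  have hU : U.ncard ≤ ∑ i ∈ Finset.Icc 1 (n + 1), f i :=
    (Finset.set_ncard_biUnion_le _ _).trans <| Finset.sum_le_sum fun i hi =>
      (hcard i (Finset.mem_Icc.mp hi).1).2
  have hUfin : U.Finite := Set.Finite.biUnion (Finset.finite_toSet _)
    fun i hi => (hcard i (Finset.mem_Icc.mp hi).1).1
  have hspread : A \ U ⊆ fireSet G r X0 W (n + 1) ∩ sphere G g0 (m + (n + 1)) := by
    rintro v ⟨⟨hvs, u, hu, huv⟩, hvU⟩
    refine ⟨mem_fireSet_succ_of_adj hr hd hu.1 huv fun i hi hin hvi => hvU ?_, hvs⟩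
    exact Set.mem_biUnion (Finset.mem_coe.mpr (Finset.mem_Icc.mpr ⟨hi, hin⟩)) hvi
  have hsplit : A.ncard ≤ (A \ U).ncard + U.ncard := Set.ncard_le_ncard_sdiff_add_ncard _ _ hUfin
  have hle : (A \ U).ncard ≤ (fireSet G r X0 W (n + 1) ∩ sphere G g0 (m + (n + 1))).ncard :=
    Set.ncard_le_ncard hspread ((sphere_finite hlf g0 _).subset Set.inter_subset_right)
  have hcount : (A.ncard : ℝ) ≤
      (fireSet G r X0 W (n + 1) ∩ sphere G g0 (m + (n + 1))).ncard
        + ((∑ i ∈ Finset.Icc 1 (n + 1), f i : ℕ) : ℝ) := by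
    exact_mod_cast hsplit.trans (add_le_add hle hU)
  linarith

end Fire

lemma pos_of_mul_sub_le {a b : ℕ → ℝ} {lam S : ℝ} (hlam : 0 < lam)
    (hS : ∀ n, ∑ i ∈ Finset.range n, b i / lam ^ (i + 1) ≤ S) (ha : S < a 0)
    (hrec : ∀ n, lam * a n - b n ≤ a (n + 1)) (n : ℕ) : 0 < a n := by
  -- divide the recurrence by `lam ^ (n + 1)` and telescope
  have key : ∀ n, a 0 - ∑ i ∈ Finset.range n, b i / lam ^ (i + 1) ≤ a n / lam ^ n := by
    intro n
    induction n with
    | zero => simp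
    | succ n ih =>
      have hstep : a n / lam ^ n - b n / lam ^ (n + 1) ≤ a (n + 1) / lam ^ (n + 1) := by
        rw [show a n / lam ^ n = lam * a n / lam ^ (n + 1) by field_simp; ring, ← sub_div]
        exact div_le_div_of_nonneg_right (hrec n) (by positivity)
      rw [Finset.sum_range_succ]
      linarith
  have : 0 < a n / lam ^ n := by linarith [key n, hS n]
  exact (div_pos_iff_of_pos_right (by positivity)).mp this

lemma sum_Icc_mul_pow_le (c d k : ℕ) :
    ∑ i ∈ Finset.Icc 1 k, c * i ^ d ≤ c * k ^ (d + 1) := by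
  calc ∑ i ∈ Finset.Icc 1 k, c * i ^ d ≤ (Finset.Icc 1 k).card • (c * k ^ d) :=
        Finset.sum_le_card_nsmul _ _ _ fun i hi => by gcongr; exact (Finset.mem_Icc.mp hi).2
    _ = c * k ^ (d + 1) := by simp only [Nat.card_Icc, Nat.add_sub_cancel, smul_eq_mul]; ring

lemma exists_sum_range_sum_Icc_div_pow_le {lam : ℝ} (hlam : 1 < lam) (c d : ℕ) :
    ∃ S, ∀ n, ∑ i ∈ Finset.range n,
      ((∑ j ∈ Finset.Icc 1 (i + 1), c * j ^ d : ℕ) : ℝ) / lam ^ (i + 1) ≤ S := by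
  have hlam0 : 0 < lam := one_pos.trans hlam
  have hgeom : Summable fun i : ℕ => (i : ℝ) ^ (d + 1) * lam⁻¹ ^ i :=
    summable_pow_mul_geometric_of_norm_lt_one _ <| by
      rw [norm_inv, Real.norm_of_nonneg hlam0.le]; exact inv_lt_one_of_one_lt₀ hlam
  have hsum : Summable fun i : ℕ => (c * ((i : ℝ) + 1) ^ (d + 1)) / lam ^ (i + 1) := by
    refine (((summable_nat_add_iff 1).mpr hgeom).mul_left (c : ℝ)).congr fun i => ?_
    simp only [Nat.cast_add, Nat.cast_one, inv_pow, div_eq_mul_inv, mul_assoc]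
  refine ⟨_, fun n => (Finset.sum_le_sum fun i _ => ?_).trans
    (hsum.sum_le_tsum _ fun i _ => by positivity)⟩
  gcongr
  exact_mod_cast sum_Icc_mul_pow_le c d (i + 1)

/-- if every subset `A` of every sphere about `g0` satisfies `|A*| ≥ λ·|A|` with
`λ > 1`, then `G` has no polynomial containment property. -/
theorem stmt12 {V : Type*} (G : SimpleGraph V) (hlf : LocallyFiniteGraph G) (g0 : V)
    (lam : ℝ) (hlam : 1 < lam)
    (hexp : ∀ n : ℕ, ∀ A ⊆ sphere G g0 n,
      lam * (A.ncard : ℝ) ≤ ((nextAdj G g0 n A).ncard : ℝ)) :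
    ∀ d : ℕ, ∀ c : ℕ, 1 ≤ c → ¬ HasContainmentProperty G 1 (fun n => c * n ^ d) := by
  intro d c _ hcont
  obtain ⟨S, hS⟩ := exists_sum_range_sum_Icc_div_pow_le hlam c d
  obtain ⟨m, hm⟩ := pow_unbounded_of_one_lt S hlam
  obtain ⟨W, hcard, hd, N, -, hN⟩ := hcont (sphere G g0 m) (sphere_finite hlf g0 m)
  have hfront (n : ℕ) :
      0 < ((fireSet G 1 (sphere G g0 m) W n ∩ sphere G g0 (m + n)).ncard : ℝ) := by
    refine pos_of_mul_sub_le (one_pos.trans hlam) hS ?_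
      (ncard_fireSet_inter_sphere_succ hlf hexp le_rfl hcard hd m) n
    have hsphere := pow_le_ncard_sphere hlf (zero_le_one.trans hlam.le) hexp m
    simpa [fireSet] using hm.trans_le hsphere
  obtain ⟨v, hv, hvs⟩ := Set.nonempty_of_ncard_ne_zero (Nat.cast_pos.mp (hfront (N + 1))).ne'
  rw [hN (N + 1) N.le_succ] at hv
  have hinside := (fireSet_subset_ball (sphere_subset_ball m) N hv).2
  rw [hvs.2] at hinside
  omega

end Firefighter
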